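/- arXiv:2508.00341 — 5 statements merged into one kernel-verified Lean document; each statement's English description precedes it below -/
import Mathlib

section
/- Let n be a positive natural number and let S be a nonempty finite index set. Let h : S → EuclideanSpace ℂ (Fin n) be channel vectors with ‖h i‖ = 1 for all i ∈ S. Define the pairwise angles α_{i,j} = arccos ‖⟪h i, h j⟫‖ and let α = max_{i,j ∈ S} α_{i,j} be the maximum angle between any two channel vectors. Suppose m* with ‖m*‖ = 1 attains the maximum of min_{i ∈ S} ‖⟪m, h i⟫‖² over all m with ‖m‖ = 1, and define θ_i = arccos ‖⟪m*, h i⟫‖. Then for every i ∈ S, 0 ≤ θ_i ≤ α. -/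
/-!
Testing the optimality of `m*` against the feasible beam `m = h i` shows that the smallest
correlation `‖⟪h i, h j⟫‖` over `j` is at most `‖⟪m*, h i⟫‖`. Since `arccos` is antitone,
`θ_i` is then at most the pairwise angle between `h i` and that `h j`.
-/

open Real

open scoped ComplexInnerProductSpace

theorem Finite.exists_le_of_ciInf_le {α ι : Type*} [ConditionallyCompleteLinearOrder α]
    [Finite ι] [Nonempty ι] {f g : ι → α} (hfg : ⨅ i, f i ≤ ⨅ i, g i) (k : ι) :
    ∃ j, f j ≤ g k := by
  obtain ⟨j, hj⟩ := exists_eq_ciInf_of_finite (f := f)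
  exact ⟨j, hj ▸ hfg.trans (Finite.ciInf_le g k)⟩

theorem exists_norm_inner_le_of_forall_iInf_le {𝕜 E ι : Type*} [RCLike 𝕜]
    [NormedAddCommGroup E] [InnerProductSpace 𝕜 E] [Finite ι] {h : ι → E} {m : E}
    (hopt : ∀ v : E, ‖v‖ = 1 → ⨅ k, ‖inner 𝕜 v (h k)‖ ^ 2 ≤ ⨅ k, ‖inner 𝕜 m (h k)‖ ^ 2)
    {i : ι} (hi : ‖h i‖ = 1) :
    ∃ j, ‖inner 𝕜 (h i) (h j)‖ ≤ ‖inner 𝕜 m (h i)‖ := by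
  have : Nonempty ι := ⟨i⟩
  obtain ⟨j, hj⟩ := Finite.exists_le_of_ciInf_le (hopt (h i) hi) i
  exact ⟨j, (sq_le_sq₀ (norm_nonneg _) (norm_nonneg _)).1 hj⟩

theorem stmt1_general (n : ℕ) (S : Type*) [Fintype S]
    (h : S → EuclideanSpace ℂ (Fin n)) (hunit : ∀ i : S, ‖h i‖ = 1)
    (mstar : EuclideanSpace ℂ (Fin n))
    (hopt : ∀ m : EuclideanSpace ℂ (Fin n), ‖m‖ = 1 →
      (⨅ i : S, ‖⟪m, h i⟫‖ ^ 2) ≤ ⨅ i : S, ‖⟪mstar, h i⟫‖ ^ 2) :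
    ∀ i : S,
      0 ≤ Real.arccos ‖⟪mstar, h i⟫‖ ∧
      Real.arccos ‖⟪mstar, h i⟫‖ ≤
        ⨆ i : S, ⨆ j : S, Real.arccos ‖⟪h i, h j⟫‖ := by
  intro i
  obtain ⟨j, hj⟩ := exists_norm_inner_le_of_forall_iInf_le hopt (hunit i)
  refine ⟨arccos_nonneg _, ?_⟩
  calc arccos ‖⟪mstar, h i⟫‖ ≤ arccos ‖⟪h i, h j⟫‖ := arccos_le_arccos hj
    _ ≤ ⨆ i, ⨆ j, arccos ‖⟪h i, h j⟫‖ :=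
      Finite.le_ciSup_of_le i (Finite.le_ciSup_of_le j le_rfl)

/-- For unit-norm channel vectors `h i`, if `m*` maximizes the minimum squared
projection `‖⟪m, h i⟫‖²` over unit-norm `m`, then each angle
`θ_i = arccos ‖⟪m*, h i⟫‖` satisfies `0 ≤ θ_i ≤ α`, where
`α = max_{i,j} arccos ‖⟪h i, h j⟫‖` is the maximum pairwise channel angle. -/
theorem stmt1 (n : ℕ) (hn : 0 < n) (S : Type*) [Fintype S] [Nonempty S]
    (h : S → EuclideanSpace ℂ (Fin n)) (hunit : ∀ i : S, ‖h i‖ = 1)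
    (mstar : EuclideanSpace ℂ (Fin n)) (hmstar : ‖mstar‖ = 1)
    (hopt : ∀ m : EuclideanSpace ℂ (Fin n), ‖m‖ = 1 →
      (⨅ i : S, ‖⟪m, h i⟫‖ ^ 2) ≤ ⨅ i : S, ‖⟪mstar, h i⟫‖ ^ 2) :
    ∀ i : S,
      0 ≤ Real.arccos ‖⟪mstar, h i⟫‖ ∧
      Real.arccos ‖⟪mstar, h i⟫‖ ≤
        ⨆ i : S, ⨆ j : S, Real.arccos ‖⟪h i, h j⟫‖ :=
  stmt1_general n S h hunit mstar hopt
end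

section
/- Let E be a real inner product space (for concreteness, a finite-dimensional real inner product space). Let f₁, f₂ : E → ℝ be convex differentiable functions whose gradients ∇f₁ and ∇f₂ are Lipschitz with constants L₁ > 0 and L₂ > 0 respectively. Set f = f₁ − f₂ and suppose f(x) ≥ f* for all x ∈ E. Let x¹, x² ∈ E satisfy the DCA iteration condition ∇f₂(x¹) = ∇f₁(x²). Let 0 < η ≤ L₁ and suppose the PL-type condition holds at both points: f(x^k) − f* ≤ (1/(2η))·‖∇f₁(x^k) − ∇f₂(x^k)‖² for k ∈ {1, 2}. Then f(x²) − f* ≤ ((1 − η/L₁)/(1 + η/L₂))·(f(x¹) − f*); i.e., one step of the DC algorithm contracts the optimality gap by the linear factor (1 − η/L₁)/(1 + η/L₂). -/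
open scoped Gradient
open InnerProductSpace

section DCAux
variable {E : Type*} [NormedAddCommGroup E] [InnerProductSpace ℝ E] [CompleteSpace E]

lemma line_hasDerivAt {f : E → ℝ} (hd : Differentiable ℝ f) (x v : E) (t : ℝ) :
    HasDerivAt (fun s : ℝ => f (x + s • v)) ⟪∇ f (x + t • v), v⟫_ℝ t := by
  have hc : HasDerivAt (fun s : ℝ => x + s • v) v t := by
    simpa using ((hasDerivAt_id t).smul_const v).const_add x
  have hf : HasFDerivAt f (toDual ℝ E (∇ f (x + t • v))) (x + t • v) :=
    hasGradientAt_iff_hasFDerivAt.mp (hd _).hasGradientAt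
  have h := hf.comp_hasDerivAt t hc
  rw [toDual_apply_apply] at h
  exact h

lemma grad_continuous {f : E → ℝ} {L : ℝ}
    (hlip : ∀ x y : E, ‖∇ f x - ∇ f y‖ ≤ L * ‖x - y‖) (hL : 0 < L) :
    Continuous (∇ f) := by
  have : LipschitzWith (Real.toNNReal L) (∇ f) := by
    apply LipschitzWith.of_dist_le_mul
    intro a b
    simpa [dist_eq_norm, Real.coe_toNNReal _ hL.le] using hlip a b
  exact this.continuous

lemma descent {f : E → ℝ} {L : ℝ} (hd : Differentiable ℝ f) (hL : 0 < L)
    (hlip : ∀ x y : E, ‖∇ f x - ∇ f y‖ ≤ L * ‖x - y‖) (x y : E) :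
    f y ≤ f x + ⟪∇ f x, y - x⟫_ℝ + L / 2 * ‖y - x‖ ^ 2 := by
  set v := y - x with hv
  have hint : ∀ t ∈ Set.uIcc (0:ℝ) 1,
      HasDerivAt (fun s : ℝ => f (x + s • v)) ⟪∇ f (x + t • v), v⟫_ℝ t :=
    fun t _ => line_hasDerivAt hd x v t
  have hcont : Continuous fun t : ℝ => ⟪∇ f (x + t • v), v⟫_ℝ := by
    apply Continuous.inner
    · exact (grad_continuous hlip hL).comp (by continuity)
    · exact continuous_const
  have hftc : f (x + (1:ℝ) • v) - f (x + (0:ℝ) • v)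
      = ∫ t in (0:ℝ)..1, ⟪∇ f (x + t • v), v⟫_ℝ :=
    (intervalIntegral.integral_eq_sub_of_hasDerivAt hint
      (hcont.intervalIntegrable 0 1)).symm
  have hbound : ∀ t ∈ Set.Icc (0:ℝ) 1,
      ⟪∇ f (x + t • v), v⟫_ℝ ≤ ⟪∇ f x, v⟫_ℝ + (L * ‖v‖ ^ 2) * t := by
    intro t ht
    have h1 : ⟪∇ f (x + t • v) - ∇ f x, v⟫_ℝ ≤ L * t * ‖v‖ ^ 2 := by
      calc ⟪∇ f (x + t • v) - ∇ f x, v⟫_ℝ ≤ ‖∇ f (x + t • v) - ∇ f x‖ * ‖v‖ :=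
            real_inner_le_norm _ _
        _ ≤ (L * ‖x + t • v - x‖) * ‖v‖ := by
            have := hlip (x + t • v) x
            nlinarith [norm_nonneg v]
        _ = L * t * ‖v‖ ^ 2 := by
            rw [add_sub_cancel_left, norm_smul, Real.norm_eq_abs, abs_of_nonneg ht.1]
            ring
    have h2 : ⟪∇ f (x + t • v), v⟫_ℝ = ⟪∇ f x, v⟫_ℝ + ⟪∇ f (x + t • v) - ∇ f x, v⟫_ℝ := by
      rw [inner_sub_left]; ring
    rw [h2]; linarith
  have hmono : (∫ t in (0:ℝ)..1, ⟪∇ f (x + t • v), v⟫_ℝ)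
      ≤ ∫ t in (0:ℝ)..1, (⟪∇ f x, v⟫_ℝ + (L * ‖v‖ ^ 2) * t) := by
    apply intervalIntegral.integral_mono_on zero_le_one (hcont.intervalIntegrable 0 1)
      ((continuous_const.add (continuous_const.mul continuous_id)).intervalIntegrable 0 1)
    exact hbound
  have hrhs : (∫ t in (0:ℝ)..1, (⟪∇ f x, v⟫_ℝ + (L * ‖v‖ ^ 2) * t))
      = ⟪∇ f x, v⟫_ℝ + L / 2 * ‖v‖ ^ 2 := by
    have : (fun t : ℝ => ⟪∇ f x, v⟫_ℝ + (L * ‖v‖ ^ 2) * t)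
        = fun t : ℝ => ⟪∇ f x, v⟫_ℝ + (L * ‖v‖ ^ 2) * id t := rfl
    rw [this, intervalIntegral.integral_add (f := fun _ => ⟪∇ f x, v⟫_ℝ)
      (g := fun t : ℝ => L * ‖v‖ ^ 2 * id t) (intervalIntegrable_const)
      ((continuous_const.mul continuous_id).intervalIntegrable 0 1),
      intervalIntegral.integral_const_mul]
    simp [integral_id]; ring
  have : f (x + (1:ℝ) • v) - f (x + (0:ℝ) • v) ≤ ⟪∇ f x, v⟫_ℝ + L / 2 * ‖v‖ ^ 2 := by
    rw [hftc]; exact hmono.trans (le_of_eq hrhs)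
  have h0 : x + (0:ℝ) • v = x := by simp
  have h1 : x + (1:ℝ) • v = y := by simp [hv]
  rw [h0, h1] at this
  linarith

lemma convex_grad_ineq {f : E → ℝ} (hc : ConvexOn ℝ Set.univ f)
    (hd : Differentiable ℝ f) (x y : E) :
    f x + ⟪∇ f x, y - x⟫_ℝ ≤ f y := by
  set v := y - x with hv
  have hg : ConvexOn ℝ Set.univ (fun t : ℝ => f (x + t • v)) := by
    have haff := hc.comp_affineMap (AffineMap.lineMap x (x + v) : ℝ →ᵃ[ℝ] E)
    have : (f ∘ (AffineMap.lineMap x (x + v) : ℝ →ᵃ[ℝ] E))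
        = fun t : ℝ => f (x + t • v) := by
      funext t
      simp [Function.comp, AffineMap.lineMap_apply, add_comm]
    rw [this] at haff
    simpa using haff
  have hder : HasDerivAt (fun t : ℝ => f (x + t • v)) ⟪∇ f (x + (0:ℝ) • v), v⟫_ℝ 0 :=
    line_hasDerivAt hd x v 0
  have hslope := hg.le_slope_of_hasDerivAt (Set.mem_univ (0:ℝ)) (Set.mem_univ (1:ℝ))
    zero_lt_one hder
  rw [slope_def_field] at hslope
  simp only [zero_smul, add_zero, one_smul] at hslope hder
  have h1 : x + v = y := by simp [hv]
  rw [h1] at hslope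
  have : ⟪∇ f x, v⟫_ℝ ≤ (f y - f x) / (1 - 0) := by simpa [div_eq_mul_inv] using hslope
  rw [hv] at this
  have h2 : (f y - f x) / (1 - 0) = f y - f x := by norm_num
  linarith [h2 ▸ this]

lemma cocoercive {f : E → ℝ} {L : ℝ} (hc : ConvexOn ℝ Set.univ f)
    (hd : Differentiable ℝ f) (hL : 0 < L)
    (hlip : ∀ x y : E, ‖∇ f x - ∇ f y‖ ≤ L * ‖x - y‖) (x y : E) :
    f x + ⟪∇ f x, y - x⟫_ℝ + 1 / (2 * L) * ‖∇ f y - ∇ f x‖ ^ 2 ≤ f y := by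
  set d := ∇ f y - ∇ f x with hdd
  set z := y - L⁻¹ • d with hz
  have hB := convex_grad_ineq hc hd x z
  have hA := descent hd hL hlip y z
  have hzy : z - y = -(L⁻¹ • d) := by rw [hz]; abel
  have hzx : z - x = (y - x) + (z - y) := by abel
  have e1 : ⟪∇ f x, z - x⟫_ℝ = ⟪∇ f x, y - x⟫_ℝ - L⁻¹ * ⟪∇ f x, d⟫_ℝ := by
    rw [hzx, inner_add_right, hzy, inner_neg_right, real_inner_smul_right]; ring
  have e2 : ⟪∇ f y, z - y⟫_ℝ = - (L⁻¹ * ⟪∇ f y, d⟫_ℝ) := by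
    rw [hzy, inner_neg_right, real_inner_smul_right]
  have e3 : ‖z - y‖ ^ 2 = L⁻¹ ^ 2 * ‖d‖ ^ 2 := by
    rw [hzy, norm_neg, norm_smul, Real.norm_eq_abs, abs_of_nonneg (inv_nonneg.mpr hL.le)]
    ring
  have e4 : ⟪∇ f y, d⟫_ℝ - ⟪∇ f x, d⟫_ℝ = ‖d‖ ^ 2 := by
    rw [← inner_sub_left, ← hdd, real_inner_self_eq_norm_sq]
  rw [e1] at hB
  rw [e2, e3] at hA
  have hL' : L ≠ 0 := ne_of_gt hL
  have key : f x + ⟪∇ f x, y - x⟫_ℝ ≤ f y - L⁻¹ * ‖d‖ ^ 2 + L / 2 * (L⁻¹ ^ 2 * ‖d‖ ^ 2) := by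
    have e4' : L⁻¹ * ⟪∇ f y, d⟫_ℝ - L⁻¹ * ⟪∇ f x, d⟫_ℝ = L⁻¹ * ‖d‖ ^ 2 := by
      rw [← mul_sub, e4]
    linarith
  have : L⁻¹ * ‖d‖ ^ 2 - L / 2 * (L⁻¹ ^ 2 * ‖d‖ ^ 2) = 1 / (2 * L) * ‖d‖ ^ 2 := by
    field_simp; ring
  linarith

end DCAux

/-- One step of the DC algorithm contracts the optimality gap: if `f₁, f₂` are convex
and differentiable with `L₁`-, `L₂`-Lipschitz gradients, `f = f₁ − f₂ ≥ f*`,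
`∇f₂(x¹) = ∇f₁(x²)` (DCA step), `0 < η ≤ L₁`, and the PL-type condition holds at
`x¹` and `x²`, then `f(x²) − f* ≤ ((1 − η/L₁)/(1 + η/L₂))·(f(x¹) − f*)`. -/
theorem stmt5 (E : Type*) [NormedAddCommGroup E] [InnerProductSpace ℝ E]
    [FiniteDimensional ℝ E]
    (f₁ f₂ : E → ℝ) (L₁ L₂ : ℝ) (hL₁ : 0 < L₁) (hL₂ : 0 < L₂)
    (hconv₁ : ConvexOn ℝ Set.univ f₁) (hconv₂ : ConvexOn ℝ Set.univ f₂)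
    (hdiff₁ : Differentiable ℝ f₁) (hdiff₂ : Differentiable ℝ f₂)
    (hlip₁ : ∀ x y : E, ‖∇ f₁ x - ∇ f₁ y‖ ≤ L₁ * ‖x - y‖)
    (hlip₂ : ∀ x y : E, ‖∇ f₂ x - ∇ f₂ y‖ ≤ L₂ * ‖x - y‖)
    (fstar : ℝ) (hlb : ∀ x : E, fstar ≤ f₁ x - f₂ x)
    (x₁ x₂ : E) (hdca : ∇ f₂ x₁ = ∇ f₁ x₂)
    (η : ℝ) (hη : 0 < η) (hηL : η ≤ L₁)
    (hPL₁ : f₁ x₁ - f₂ x₁ - fstar ≤ (1 / (2 * η)) * ‖∇ f₁ x₁ - ∇ f₂ x₁‖ ^ 2)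
    (hPL₂ : f₁ x₂ - f₂ x₂ - fstar ≤ (1 / (2 * η)) * ‖∇ f₁ x₂ - ∇ f₂ x₂‖ ^ 2) :
    f₁ x₂ - f₂ x₂ - fstar ≤
      ((1 - η / L₁) / (1 + η / L₂)) * (f₁ x₁ - f₂ x₁ - fstar) := by
  have h1 := cocoercive hconv₁ hdiff₁ hL₁ hlip₁ x₂ x₁
  have h2 := cocoercive hconv₂ hdiff₂ hL₂ hlip₂ x₁ x₂
  set a := f₁ x₁ - f₂ x₁ - fstar with ha
  set b := f₁ x₂ - f₂ x₂ - fstar with hb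
  set A := ‖∇ f₁ x₁ - ∇ f₂ x₁‖ ^ 2 with hA
  set B := ‖∇ f₁ x₂ - ∇ f₂ x₂‖ ^ 2 with hB
  -- inner terms cancel
  have hinner : ⟪∇ f₁ x₂, x₁ - x₂⟫_ℝ + ⟪∇ f₂ x₁, x₂ - x₁⟫_ℝ = 0 := by
    rw [hdca, ← inner_add_right]
    simp
  have hn1 : ‖∇ f₁ x₁ - ∇ f₁ x₂‖ ^ 2 = A := by rw [hA, ← hdca]
  have hn2 : ‖∇ f₂ x₂ - ∇ f₂ x₁‖ ^ 2 = B := by rw [hB, hdca, norm_sub_rev]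
  rw [hn1] at h1
  rw [hn2] at h2
  have hmain : 1 / (2 * L₁) * A + 1 / (2 * L₂) * B ≤ a - b := by
    have := add_le_add h1 h2
    simp only [ha, hb]
    linarith [hinner, this]
  have hA' : a * (2 * η) ≤ A := by
    rw [← le_div_iff₀ (by positivity)]
    rw [div_eq_inv_mul, ← one_div]
    exact hPL₁
  have hB' : b * (2 * η) ≤ B := by
    rw [← le_div_iff₀ (by positivity)]
    rw [div_eq_inv_mul, ← one_div]
    exact hPL₂
  have hb0 : 0 ≤ b := by rw [hb]; linarith [hlb x₂]
  have s1 : η / L₁ * a ≤ 1 / (2 * L₁) * A := by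
    have h := mul_le_mul_of_nonneg_left hA' (by positivity : (0:ℝ) ≤ 1 / (2 * L₁))
    calc η / L₁ * a = 1 / (2 * L₁) * (a * (2 * η)) := by field_simp
      _ ≤ 1 / (2 * L₁) * A := h
  have s2 : η / L₂ * b ≤ 1 / (2 * L₂) * B := by
    have h := mul_le_mul_of_nonneg_left hB' (by positivity : (0:ℝ) ≤ 1 / (2 * L₂))
    calc η / L₂ * b = 1 / (2 * L₂) * (b * (2 * η)) := by field_simp
      _ ≤ 1 / (2 * L₂) * B := h
  have hden : (0:ℝ) < 1 + η / L₂ := by positivity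
  rw [div_mul_eq_mul_div, le_div_iff₀ hden]
  nlinarith [s1, s2, hmain]
end

section
/- Let E be a finite-dimensional real inner product space. Let f₁, f₂ : E → ℝ be convex differentiable functions whose gradients are Lipschitz with constants L₁ > 0 and L₂ > 0 respectively. Set f = f₁ − f₂ with f(x) ≥ f* for all x. Let 0 < η ≤ L₁ and let (x^k)_{k ≥ 0} be a sequence of DCA iterates, i.e., ∇f₂(x^k) = ∇f₁(x^{k+1}) for all k ≥ 0, such that the PL-type condition f(x^k) − f* ≤ (1/(2η))·‖∇f₁(x^k) − ∇f₂(x^k)‖² holds at every iterate. Then the DC algorithm converges at a linear rate: for every N ≥ 0, f(x^N) − f* ≤ ρ^N·(f(x⁰) − f*), where ρ = (1 − η/L₁)/(1 + η/L₂) ∈ [0, 1). -/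
open scoped Gradient
open scoped RealInnerProductSpace

section Aux

variable {E : Type*} [NormedAddCommGroup E] [InnerProductSpace ℝ E] [CompleteSpace E]

lemma inner_gradient_eq_fderiv (f : E → ℝ) (x v : E) :
    ⟪∇ f x, v⟫ = fderiv ℝ f x v := by
  rw [gradient]
  exact InnerProductSpace.toDual_symm_apply

lemma hasDerivAt_line (f : E → ℝ) (hd : Differentiable ℝ f) (x v : E) (t : ℝ) :
    HasDerivAt (fun s : ℝ => f (x + s • v)) ⟪∇ f (x + t • v), v⟫ t := by
  have h1 : HasDerivAt (fun s : ℝ => x + s • v) v t := by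
    simpa using ((hasDerivAt_id t).smul_const v).const_add x
  have h2 := ((hd (x + t • v)).hasFDerivAt).comp_hasDerivAt t h1
  rw [inner_gradient_eq_fderiv]
  exact h2

lemma convexOn_line (f : E → ℝ) (hc : ConvexOn ℝ Set.univ f) (x v : E) :
    ConvexOn ℝ Set.univ (fun s : ℝ => f (x + s • v)) := by
  have := hc.comp_affineMap (AffineMap.lineMap x (x + v))
  have heq : (f ∘ (AffineMap.lineMap x (x + v))) = fun s : ℝ => f (x + s • v) := by
    funext s
    simp [AffineMap.lineMap_apply, add_comm]
  rw [heq] at this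
  simpa using this

/-- First-order condition for convexity. -/
lemma convex_first_order (f : E → ℝ) (hc : ConvexOn ℝ Set.univ f)
    (hd : Differentiable ℝ f) (x y : E) :
    f x + ⟪∇ f x, y - x⟫ ≤ f y := by
  set v := y - x with hv
  have hg := convexOn_line f hc x v
  have hder : HasDerivAt (fun s : ℝ => f (x + s • v)) ⟪∇ f (x + (0:ℝ) • v), v⟫ 0 :=
    hasDerivAt_line f hd x v 0
  have := hg.le_slope_of_hasDerivAt (Set.mem_univ (0:ℝ)) (Set.mem_univ (1:ℝ)) one_pos
    (by simpa using hder)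
  rw [slope_def_field] at this
  simp only [zero_smul, add_zero] at this
  have h1 : x + (1:ℝ) • v = y := by simp [hv]
  rw [h1] at this
  have : ⟪∇ f x, v⟫ ≤ (f y - f x) / (1 - 0) := by
    simpa [div_div_eq_mul_div] using this
  simp only [sub_zero, div_one] at this
  linarith

lemma gradient_continuous (f : E → ℝ) {L : ℝ} (hL : 0 < L)
    (hlip : ∀ a b : E, ‖∇ f a - ∇ f b‖ ≤ L * ‖a - b‖) :
    Continuous (∇ f) := by
  have : LipschitzWith ⟨L, hL.le⟩ (∇ f) := by
    apply LipschitzWith.of_dist_le_mul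
    intro a b
    rw [dist_eq_norm, dist_eq_norm]; exact hlip a b
  exact this.continuous

/-- Descent lemma: quadratic upper bound from Lipschitz gradient. -/
lemma descent_lemma (f : E → ℝ) (hd : Differentiable ℝ f) {L : ℝ} (hL : 0 < L)
    (hlip : ∀ a b : E, ‖∇ f a - ∇ f b‖ ≤ L * ‖a - b‖) (x y : E) :
    f y ≤ f x + ⟪∇ f x, y - x⟫ + L / 2 * ‖y - x‖ ^ 2 := by
  set v := y - x with hv
  set g' : ℝ → ℝ := fun t => ⟪∇ f (x + t • v), v⟫ with hg'
  have hcont : Continuous g' := by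
    apply Continuous.inner
    · exact (gradient_continuous f hL hlip).comp (by continuity)
    · exact continuous_const
  have hftc : ∫ t in (0:ℝ)..1, g' t = f (x + (1:ℝ) • v) - f (x + (0:ℝ) • v) := by
    exact intervalIntegral.integral_eq_sub_of_hasDerivAt
      (fun t _ => hasDerivAt_line f hd x v t) (hcont.intervalIntegrable 0 1)
  have h1 : x + (1:ℝ) • v = y := by simp [hv]
  have h0 : x + (0:ℝ) • v = x := by simp
  rw [h1, h0] at hftc
  have hbound : ∀ t ∈ Set.Icc (0:ℝ) 1, g' t ≤ ⟪∇ f x, v⟫ + L * ‖v‖ ^ 2 * t := by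
    intro t ht
    have key : g' t - ⟪∇ f x, v⟫ = ⟪∇ f (x + t • v) - ∇ f x, v⟫ := by
      simp [hg', inner_sub_left]
    have h2 : ⟪∇ f (x + t • v) - ∇ f x, v⟫ ≤ ‖∇ f (x + t • v) - ∇ f x‖ * ‖v‖ :=
      real_inner_le_norm _ _
    have h3 : ‖∇ f (x + t • v) - ∇ f x‖ ≤ L * (t * ‖v‖) := by
      have := hlip (x + t • v) x
      simpa [norm_smul, abs_of_nonneg ht.1] using this
    have h4 : ⟪∇ f (x + t • v) - ∇ f x, v⟫ ≤ L * (t * ‖v‖) * ‖v‖ :=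
      h2.trans (by nlinarith [norm_nonneg v])
    nlinarith [key, h4]
  have hint : ∫ t in (0:ℝ)..1, g' t ≤
      ∫ t in (0:ℝ)..1, (⟪∇ f x, v⟫ + L * ‖v‖ ^ 2 * t) := by
    apply intervalIntegral.integral_mono_on one_pos.le
    · exact hcont.intervalIntegrable 0 1
    · exact (by continuity : Continuous fun t : ℝ => ⟪∇ f x, v⟫ + L * ‖v‖ ^ 2 * t).intervalIntegrable 0 1
    · exact hbound
  have hrhs : ∫ t in (0:ℝ)..1, (⟪∇ f x, v⟫ + L * ‖v‖ ^ 2 * t) =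
      ⟪∇ f x, v⟫ + L / 2 * ‖v‖ ^ 2 := by
    have hI2 : IntervalIntegrable (fun t : ℝ => L * ‖v‖ ^ 2 * t)
        MeasureTheory.volume 0 1 :=
      (by fun_prop : Continuous fun t : ℝ => L * ‖v‖ ^ 2 * t).intervalIntegrable 0 1
    rw [intervalIntegral.integral_add intervalIntegrable_const hI2,
      intervalIntegral.integral_const_mul, integral_id,
      intervalIntegral.integral_const]
    norm_num
    ring
  rw [hftc] at hint
  rw [hrhs] at hint
  linarith

/-- Lower quadratic bound for convex functions with Lipschitz gradient. -/
lemma convex_lower_bound (f : E → ℝ) (hc : ConvexOn ℝ Set.univ f)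
    (hd : Differentiable ℝ f) {L : ℝ} (hL : 0 < L)
    (hlip : ∀ a b : E, ‖∇ f a - ∇ f b‖ ≤ L * ‖a - b‖) (x y : E) :
    f x + ⟪∇ f x, y - x⟫ + 1 / (2 * L) * ‖∇ f y - ∇ f x‖ ^ 2 ≤ f y := by
  set g := ∇ f y - ∇ f x with hg
  set z := y - (1 / L) • g with hz
  have hdesc := descent_lemma f hd hL hlip y z
  have hconv := convex_first_order f hc hd x z
  have hzy : z - y = -((1 / L) • g) := by rw [hz]; abel
  have hzx : z - x = (y - x) - (1 / L) • g := by rw [hz]; abel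
  have e1 : ⟪∇ f y, z - y⟫ = -(1 / L) * ⟪∇ f y, g⟫ := by
    rw [hzy, inner_neg_right, real_inner_smul_right]; ring
  have e2 : ‖z - y‖ ^ 2 = (1 / L) ^ 2 * ‖g‖ ^ 2 := by
    rw [hzy, norm_neg, norm_smul, Real.norm_eq_abs, mul_pow, sq_abs]
  have e3 : ⟪∇ f x, z - x⟫ = ⟪∇ f x, y - x⟫ - (1 / L) * ⟪∇ f x, g⟫ := by
    rw [hzx, inner_sub_right, real_inner_smul_right]
  have e4 : ⟪∇ f y, g⟫ - ⟪∇ f x, g⟫ = ‖g‖ ^ 2 := by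
    rw [← inner_sub_left, ← hg, real_inner_self_eq_norm_sq]
  have hL2 : (L : ℝ) ≠ 0 := hL.ne'
  have key : f x + ⟪∇ f x, y - x⟫ - (1 / L) * ⟪∇ f x, g⟫ ≤
      f y - (1 / L) * ⟪∇ f y, g⟫ + L / 2 * ((1 / L) ^ 2 * ‖g‖ ^ 2) := by
    calc f x + ⟪∇ f x, y - x⟫ - (1 / L) * ⟪∇ f x, g⟫
        = f x + ⟪∇ f x, z - x⟫ := by rw [e3]; ring
      _ ≤ f z := hconv
      _ ≤ f y + ⟪∇ f y, z - y⟫ + L / 2 * ‖z - y‖ ^ 2 := hdesc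
      _ = f y - (1 / L) * ⟪∇ f y, g⟫ + L / 2 * ((1 / L) ^ 2 * ‖g‖ ^ 2) := by
          rw [e1, e2]; ring
  have hfield : L / 2 * ((1 / L) ^ 2 * ‖g‖ ^ 2) = 1 / (2 * L) * ‖g‖ ^ 2 := by
    field_simp
  rw [hfield] at key
  have : (1 / L) * (⟪∇ f y, g⟫ - ⟪∇ f x, g⟫) = (1 / L) * ‖g‖ ^ 2 := by rw [e4]
  have h1L : 1 / L * ‖g‖ ^ 2 - 1 / (2 * L) * ‖g‖ ^ 2 = 1 / (2 * L) * ‖g‖ ^ 2 := by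
    field_simp; ring
  nlinarith [key, this, h1L]

end Aux

/-- Linear convergence of the DC algorithm: under convexity, Lipschitz-gradient and
PL-type conditions, the DCA iterates `x k` (with `∇f₂(x^k) = ∇f₁(x^{k+1})`) satisfy
`f(x^N) − f* ≤ ρ^N·(f(x⁰) − f*)` with `ρ = (1 − η/L₁)/(1 + η/L₂) ∈ [0, 1)`. -/
theorem stmt6 (E : Type*) [NormedAddCommGroup E] [InnerProductSpace ℝ E]
    [FiniteDimensional ℝ E]
    (f₁ f₂ : E → ℝ) (L₁ L₂ : ℝ) (hL₁ : 0 < L₁) (hL₂ : 0 < L₂)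
    (hconv₁ : ConvexOn ℝ Set.univ f₁) (hconv₂ : ConvexOn ℝ Set.univ f₂)
    (hdiff₁ : Differentiable ℝ f₁) (hdiff₂ : Differentiable ℝ f₂)
    (hlip₁ : ∀ x y : E, ‖∇ f₁ x - ∇ f₁ y‖ ≤ L₁ * ‖x - y‖)
    (hlip₂ : ∀ x y : E, ‖∇ f₂ x - ∇ f₂ y‖ ≤ L₂ * ‖x - y‖)
    (fstar : ℝ) (hlb : ∀ x : E, fstar ≤ f₁ x - f₂ x)
    (η : ℝ) (hη : 0 < η) (hηL : η ≤ L₁)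
    (x : ℕ → E) (hdca : ∀ k : ℕ, ∇ f₂ (x k) = ∇ f₁ (x (k + 1)))
    (hPL : ∀ k : ℕ,
      f₁ (x k) - f₂ (x k) - fstar ≤
        (1 / (2 * η)) * ‖∇ f₁ (x k) - ∇ f₂ (x k)‖ ^ 2) :
    (0 ≤ (1 - η / L₁) / (1 + η / L₂) ∧ (1 - η / L₁) / (1 + η / L₂) < 1) ∧
    ∀ N : ℕ,
      f₁ (x N) - f₂ (x N) - fstar ≤
        ((1 - η / L₁) / (1 + η / L₂)) ^ N * (f₁ (x 0) - f₂ (x 0) - fstar) := by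
  set ρ := (1 - η / L₁) / (1 + η / L₂) with hρ
  have hnum : 0 ≤ 1 - η / L₁ := by
    rw [sub_nonneg]
    exact div_le_one_of_le₀ hηL hL₁.le
  have hden : 1 < 1 + η / L₂ := by
    have : 0 < η / L₂ := div_pos hη hL₂
    linarith
  have hden0 : 0 < 1 + η / L₂ := by linarith
  have hρnn : 0 ≤ ρ := div_nonneg hnum hden0.le
  have hρlt : ρ < 1 := by
    rw [hρ, div_lt_one hden0]
    have : 0 < η / L₁ := div_pos hη hL₁
    linarith
  refine ⟨⟨hρnn, hρlt⟩, ?_⟩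
  -- one-step contraction
  have hstep : ∀ k : ℕ,
      f₁ (x (k + 1)) - f₂ (x (k + 1)) - fstar ≤
        ρ * (f₁ (x k) - f₂ (x k) - fstar) := by
    intro k
    set p := x k
    set q := x (k + 1)
    set a := f₁ p - f₂ p - fstar with ha
    set b := f₁ q - f₂ q - fstar with hb
    have hgeq : ∇ f₂ p = ∇ f₁ q := hdca k
    -- lower bound for f₁ centered at q evaluated at p
    have h1 := convex_lower_bound f₁ hconv₁ hdiff₁ hL₁ hlip₁ q p
    -- lower bound for f₂ centered at p evaluated at q
    have h2 := convex_lower_bound f₂ hconv₂ hdiff₂ hL₂ hlip₂ p q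
    have hinner : ⟪∇ f₁ q, p - q⟫ + ⟪∇ f₂ p, q - p⟫ = 0 := by
      rw [hgeq, ← inner_add_right]
      simp
    have hn1 : ‖∇ f₁ p - ∇ f₁ q‖ = ‖∇ f₁ p - ∇ f₂ p‖ := by rw [hgeq]
    have hn2 : ‖∇ f₂ q - ∇ f₂ p‖ = ‖∇ f₁ q - ∇ f₂ q‖ := by
      rw [hgeq, norm_sub_rev]
    rw [hn1] at h1
    rw [hn2] at h2
    -- PL bounds
    have hPLk := hPL k
    have hPLk1 := hPL (k + 1)
    have hb1 : ‖∇ f₁ p - ∇ f₂ p‖ ^ 2 ≥ 2 * η * a := by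
      have h2η : 0 < 2 * η := by linarith
      rw [ha]
      have := hPLk
      rw [ge_iff_le, ← le_div_iff₀' (by positivity)]
      calc f₁ p - f₂ p - fstar ≤ (1 / (2 * η)) * ‖∇ f₁ p - ∇ f₂ p‖ ^ 2 := hPLk
        _ = ‖∇ f₁ p - ∇ f₂ p‖ ^ 2 / (2 * η) := by ring
    have hb2 : ‖∇ f₁ q - ∇ f₂ q‖ ^ 2 ≥ 2 * η * b := by
      rw [hb]
      rw [ge_iff_le, ← le_div_iff₀' (by positivity)]
      calc f₁ q - f₂ q - fstar ≤ (1 / (2 * η)) * ‖∇ f₁ q - ∇ f₂ q‖ ^ 2 := hPLk1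
        _ = ‖∇ f₁ q - ∇ f₂ q‖ ^ 2 / (2 * η) := by ring
    -- combine: b + (η/L₁) a + (η/L₂) b ≤ a
    have hcomb : b * (1 + η / L₂) ≤ (1 - η / L₁) * a := by
      have c1 : η / L₁ * a ≤ 1 / (2 * L₁) * ‖∇ f₁ p - ∇ f₂ p‖ ^ 2 := by
        have h := mul_le_mul_of_nonneg_left hb1.le
          (by positivity : (0:ℝ) ≤ 1 / (2 * L₁))
        calc η / L₁ * a = 1 / (2 * L₁) * (2 * η * a) := by field_simp
          _ ≤ _ := h
      have c2 : η / L₂ * b ≤ 1 / (2 * L₂) * ‖∇ f₁ q - ∇ f₂ q‖ ^ 2 := by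
        have h := mul_le_mul_of_nonneg_left hb2.le
          (by positivity : (0:ℝ) ≤ 1 / (2 * L₂))
        calc η / L₂ * b = 1 / (2 * L₂) * (2 * η * b) := by field_simp
          _ ≤ _ := h
      -- from h1 + h2 + hinner:
      nlinarith [h1, h2, hinner, c1, c2]
    calc b = b * (1 + η / L₂) / (1 + η / L₂) := by field_simp
      _ ≤ (1 - η / L₁) * a / (1 + η / L₂) := by
          exact (div_le_div_iff_of_pos_right hden0).mpr hcomb
      _ = ρ * a := by rw [hρ]; ring
  -- induction
  intro N
  induction N with
  | zero => simp
  | succ n ih =>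
    calc f₁ (x (n + 1)) - f₂ (x (n + 1)) - fstar
        ≤ ρ * (f₁ (x n) - f₂ (x n) - fstar) := hstep n
      _ ≤ ρ * (ρ ^ n * (f₁ (x 0) - f₂ (x 0) - fstar)) := by
          exact mul_le_mul_of_nonneg_left ih hρnn
      _ = ρ ^ (n + 1) * (f₁ (x 0) - f₂ (x 0) - fstar) := by ring
end

section
/- Let E be a finite-dimensional real inner product space, let 0 ≤ μ < L be real numbers, and let f : E → ℝ be a differentiable function that is μ-strongly convex (i.e., x ↦ f(x) − (μ/2)‖x‖² is convex) and whose gradient ∇f is Lipschitz with constant L. Then for all x, y ∈ E: f(x) − f(y) − ⟪∇f(y), x − y⟫ ≥ (1/(2(1 − μ/L)))·( (1/L)·‖∇f(x) − ∇f(y)‖² + μ·‖x − y‖² − (2μ/L)·⟪∇f(y) − ∇f(x), y − x⟫ ). -/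
open scoped RealInnerProductSpace Gradient

section aux
variable {E : Type*} [NormedAddCommGroup E] [InnerProductSpace ℝ E] [CompleteSpace E]

lemma aux_hasDerivAt_line {g : E → ℝ} {G : E → E} (hg : ∀ x, HasGradientAt g (G x) x)
    (a d : E) (t : ℝ) :
    HasDerivAt (fun s : ℝ => g (s • d + a)) ⟪G (t • d + a), d⟫ t := by
  have hc : HasDerivAt (fun s : ℝ => s • d + a) d t := by
    simpa using ((hasDerivAt_id t).smul_const d).add_const a
  have := ((hg (t • d + a)).hasFDerivAt).comp_hasDerivAt t hc
  simpa [InnerProductSpace.toDual_apply_apply, Function.comp_def] using this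

lemma aux_convex_lb {g : E → ℝ} {G : E → E} (hconv : ConvexOn ℝ Set.univ g)
    (hg : ∀ x, HasGradientAt g (G x) x) (y z : E) :
    g y + ⟪G y, z - y⟫ ≤ g z := by
  set φ : ℝ → ℝ := fun t => g (t • (z - y) + y) with hφ
  have hφconv : ConvexOn ℝ Set.univ φ := by
    have h := hconv.comp_affineMap
      (AffineMap.const ℝ ℝ y +ᵥ (LinearMap.toSpanSingleton ℝ E (z - y)).toAffineMap)
    simpa [Function.comp_def, hφ, add_comm] using h
  have hder : HasDerivAt φ ⟪G y, z - y⟫ 0 := by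
    simpa using aux_hasDerivAt_line hg y (z - y) 0
  have hs := hφconv.le_slope_of_hasDerivAt (Set.mem_univ (0:ℝ)) (Set.mem_univ (1:ℝ))
    one_pos hder
  have h0 : φ 0 = g y := by simp [hφ]
  have h1 : φ 1 = g z := by simp [hφ]
  rw [slope_def_field] at hs
  rw [h0, h1] at hs
  linarith [hs]

lemma aux_descent {f : E → ℝ} {G : E → E} {L : ℝ} (hL : 0 ≤ L)
    (hg : ∀ x, HasGradientAt f (G x) x)
    (hlip : ∀ x y, ‖G x - G y‖ ≤ L * ‖x - y‖) (x z : E) :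
    f z ≤ f x + ⟪G x, z - x⟫ + L / 2 * ‖z - x‖ ^ 2 := by
  set d := z - x with hd
  set ψ : ℝ → ℝ := fun t => f (t • d + x) - t * ⟪G x, d⟫ - L / 2 * t ^ 2 * ‖d‖ ^ 2 with hψ
  have hψd : ∀ t : ℝ, HasDerivAt ψ
      (⟪G (t • d + x), d⟫ - ⟪G x, d⟫ - L * t * ‖d‖ ^ 2) t := by
    intro t
    have h1 := aux_hasDerivAt_line hg x d t
    have h2 : HasDerivAt (fun t : ℝ => t * ⟪G x, d⟫) ⟪G x, d⟫ t := by
      simpa using (hasDerivAt_id t).mul_const ⟪G x, d⟫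
    have h3 : HasDerivAt (fun t : ℝ => L / 2 * t ^ 2 * ‖d‖ ^ 2) (L * t * ‖d‖ ^ 2) t := by
      have := (((hasDerivAt_id t).pow 2).const_mul (L / 2)).mul_const (‖d‖ ^ 2)
      refine this.congr_deriv ?_
      simp only [id_eq]
      ring
    exact (h1.sub h2).sub h3
  have hanti : AntitoneOn ψ (Set.Icc (0:ℝ) 1) := by
    apply antitoneOn_of_deriv_nonpos (convex_Icc 0 1)
    · exact (Differentiable.continuous fun t => (hψd t).differentiableAt).continuousOn
    · exact fun t _ => ((hψd t).differentiableAt).differentiableWithinAt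
    · intro t ht
      rw [interior_Icc] at ht
      rw [(hψd t).deriv]
      have key : ⟪G (t • d + x), d⟫ - ⟪G x, d⟫ = ⟪G (t • d + x) - G x, d⟫ := by
        rw [inner_sub_left]
      rw [key]
      have h4 : ⟪G (t • d + x) - G x, d⟫ ≤ ‖G (t • d + x) - G x‖ * ‖d‖ :=
        real_inner_le_norm _ _
      have h5 : ‖G (t • d + x) - G x‖ ≤ L * (t * ‖d‖) := by
        have := hlip (t • d + x) x
        simpa [norm_smul, abs_of_pos ht.1, mul_assoc] using this
      nlinarith [norm_nonneg d, norm_nonneg (G (t • d + x) - G x), ht.1.le,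
        mul_le_mul_of_nonneg_right h5 (norm_nonneg d)]
  have h01 := hanti (Set.left_mem_Icc.2 zero_le_one) (Set.right_mem_Icc.2 zero_le_one)
    zero_le_one
  have hψ0 : ψ 0 = f x := by simp [hψ]
  have hψ1 : ψ 1 = f z - ⟪G x, d⟫ - L / 2 * ‖d‖ ^ 2 := by
    simp [hψ, hd]
  rw [hψ0, hψ1] at h01
  linarith

end aux

set_option maxHeartbeats 1000000 in
/-- Smooth strongly convex interpolation inequality: for a `μ`-strongly convex,
differentiable `f : E → ℝ` with `L`-Lipschitz gradient and `0 ≤ μ < L`,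
`f(x) − f(y) − ⟪∇f(y), x − y⟫ ≥ (1/(2(1 − μ/L)))·((1/L)·‖∇f(x) − ∇f(y)‖²
  + μ·‖x − y‖² − (2μ/L)·⟪∇f(y) − ∇f(x), y − x⟫)`. -/
theorem stmt8 (E : Type*) [NormedAddCommGroup E] [InnerProductSpace ℝ E]
    [FiniteDimensional ℝ E]
    (μ L : ℝ) (hμ : 0 ≤ μ) (hμL : μ < L) (f : E → ℝ)
    (hsconv : ConvexOn ℝ Set.univ (fun x => f x - (μ / 2) * ‖x‖ ^ 2))
    (hdiff : Differentiable ℝ f)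
    (hlip : ∀ x y : E, ‖∇ f x - ∇ f y‖ ≤ L * ‖x - y‖) :
    ∀ x y : E,
      (1 / (2 * (1 - μ / L))) *
          ((1 / L) * ‖∇ f x - ∇ f y‖ ^ 2 + μ * ‖x - y‖ ^ 2
            - (2 * μ / L) * ⟪∇ f y - ∇ f x, y - x⟫) ≤
        f x - f y - ⟪∇ f y, x - y⟫ := by
  have hL : 0 < L := lt_of_le_of_lt hμ hμL
  have hLμ : 0 < L - μ := by linarith
  intro x y
  set h : E → ℝ := fun z => f z - μ / 2 * ‖z‖ ^ 2 with hh
  set G : E → E := fun z => ∇ f z - μ • z with hG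
  have hgradf : ∀ z : E, HasGradientAt f (∇ f z) z := fun z => (hdiff z).hasGradientAt
  have hGgrad : ∀ z : E, HasGradientAt h (G z) z := by
    intro z
    have hq : HasFDerivAt (fun w : E => μ / 2 * ‖w‖ ^ 2)
        ((μ / 2) • (2 • (innerSL ℝ z))) z :=
      ((hasStrictFDerivAt_norm_sq z).hasFDerivAt).const_mul (μ / 2)
    have hf' : HasFDerivAt f (InnerProductSpace.toDual ℝ E (∇ f z)) z :=
      (hgradf z).hasFDerivAt
    have hsum := hf'.sub hq
    rw [hasGradientAt_iff_hasFDerivAt]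
    refine hsum.congr_fderiv ?_
    apply ContinuousLinearMap.ext
    intro v
    simp [hG, inner_sub_left, real_inner_smul_left, InnerProductSpace.toDual_apply_apply]
    ring
  have hsconv' : ConvexOn ℝ Set.univ h := hsconv
  -- descent lemma for h with constant L - μ
  have hdesc : ∀ a b : E, h b ≤ h a + ⟪G a, b - a⟫ + (L - μ) / 2 * ‖b - a‖ ^ 2 := by
    intro a b
    have hf := aux_descent hL.le hgradf hlip a b
    have hid : ‖b‖ ^ 2 = ‖a‖ ^ 2 + 2 * ⟪a, b - a⟫ + ‖b - a‖ ^ 2 := by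
      have := norm_add_sq_real a (b - a)
      simpa using this
    have hGa : ⟪G a, b - a⟫ = ⟪∇ f a, b - a⟫ - μ * ⟪a, b - a⟫ := by
      simp [hG, inner_sub_left, real_inner_smul_left]
    simp only [hh]
    rw [hGa]
    nlinarith [hf]
  -- cocoercivity of h
  set u : E := G x - G y with hu
  set c : ℝ := (L - μ)⁻¹ with hc
  set z : E := x - c • u with hz
  clear_value h G u c z
  have hA := aux_convex_lb hsconv' hGgrad y z
  have hB := hdesc x z
  have hzx : z - x = -(c • u) := by simp [hz]
  have hzy : z - y = (x - y) - c • u := by simp [hz]; abel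
  have e1 : ⟪G y, z - y⟫ = ⟪G y, x - y⟫ - c * ⟪G y, u⟫ := by
    rw [hzy, inner_sub_right, real_inner_smul_right]
  have e2 : ⟪G x, z - x⟫ = -(c * ⟪G x, u⟫) := by
    rw [hzx, inner_neg_right, real_inner_smul_right]
  have e3 : ‖z - x‖ ^ 2 = c ^ 2 * ‖u‖ ^ 2 := by
    rw [hzx, norm_neg, norm_smul]
    rw [mul_pow, Real.norm_eq_abs, sq_abs]
  have e4 : ⟪G x, u⟫ - ⟪G y, u⟫ = ‖u‖ ^ 2 := by
    rw [← inner_sub_left, ← hu, real_inner_self_eq_norm_sq]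
  have hcoco : h y + ⟪G y, x - y⟫ + 1 / (2 * (L - μ)) * ‖u‖ ^ 2 ≤ h x := by
    rw [e1] at hA
    rw [e2, e3] at hB
    have hc' : c = (L - μ)⁻¹ := hc
    have : h y + ⟪G y, x - y⟫ - c * ⟪G y, u⟫ ≤
        h x - c * ⟪G x, u⟫ + (L - μ) / 2 * (c ^ 2 * ‖u‖ ^ 2) := by linarith [hA, hB]
    have e5 : c * ⟪G x, u⟫ - c * ⟪G y, u⟫ = c * ‖u‖ ^ 2 := by
      rw [← mul_sub, e4]
    have h6 : (L - μ) / 2 * (c ^ 2 * ‖u‖ ^ 2) = c / 2 * ‖u‖ ^ 2 := by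
      rw [hc]; field_simp
    have h7 : 1 / (2 * (L - μ)) * ‖u‖ ^ 2 = c / 2 * ‖u‖ ^ 2 := by
      rw [hc]; field_simp
    linarith [this, e5, h6, h7]
  -- translate to f
  have hux : u = (∇ f x - ∇ f y) - μ • (x - y) := by
    simp [hu, hG, smul_sub]; abel
  have hnu : ‖u‖ ^ 2 = ‖∇ f x - ∇ f y‖ ^ 2 - 2 * (μ * ⟪∇ f x - ∇ f y, x - y⟫)
      + μ ^ 2 * ‖x - y‖ ^ 2 := by
    rw [hux, norm_sub_sq_real, real_inner_smul_right, norm_smul, mul_pow, Real.norm_eq_abs, sq_abs]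
  have hidxy : ‖x‖ ^ 2 = ‖y‖ ^ 2 + 2 * ⟪y, x - y⟫ + ‖x - y‖ ^ 2 := by
    have := norm_add_sq_real y (x - y)
    simpa using this
  have hGy : ⟪G y, x - y⟫ = ⟪∇ f y, x - y⟫ - μ * ⟪y, x - y⟫ := by
    simp [hG, inner_sub_left, real_inner_smul_left]
  have hinn : ⟪∇ f y - ∇ f x, y - x⟫ = ⟪∇ f x - ∇ f y, x - y⟫ := by
    rw [show ∇ f y - ∇ f x = -(∇ f x - ∇ f y) by abel,
      show y - x = -(x - y) by abel, inner_neg_neg]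
  rw [hinn]
  simp only [hh, hGy] at hcoco
  rw [hnu] at hcoco
  set A := ‖∇ f x - ∇ f y‖ ^ 2
  set B := ‖x - y‖ ^ 2
  set C := ⟪∇ f x - ∇ f y, x - y⟫
  clear_value A B C
  have halg : (1 / (2 * (1 - μ / L))) * ((1 / L) * A + μ * B - (2 * μ / L) * C)
      = 1 / (2 * (L - μ)) * (A - 2 * (μ * C) + μ ^ 2 * B) + μ / 2 * B := by
    field_simp
    ring
  rw [halg]
  nlinarith [hcoco, hidxy]
end

section
/- Let n be a positive natural number and let M : Matrix (Fin n) (Fin n) ℂ be a positive semidefinite matrix with M ≠ 0. Then the DC (difference-of-convex) rank characterization holds: Re(Tr M) − ‖M‖₂ = 0 (where ‖M‖₂ denotes the spectral norm, equal to the largest eigenvalue of M) if and only if the rank of M equals 1. -/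
open scoped Matrix.Norms.L2Operator ComplexOrder

/-- DC rank-one characterization: for a nonzero positive semidefinite
`M ∈ ℂ^{n×n}`, `Re(Tr M) − ‖M‖₂ = 0` (with `‖·‖₂` the spectral norm) if and only
if `rank M = 1`. -/
theorem stmt10 (n : ℕ) (hn : 0 < n) (M : Matrix (Fin n) (Fin n) ℂ)
    (hM : M.PosSemidef) (hM0 : M ≠ 0) :
    M.trace.re - ‖M‖ = 0 ↔ M.rank = 1 := by
  letI : CStarAlgebra (Matrix (Fin n) (Fin n) ℂ) := Matrix.instCStarAlgebra
  have hH := hM.1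
  set ev := hH.eigenvalues with hev
  have hnn : ∀ i, 0 ≤ ev i := fun i => hM.eigenvalues_nonneg i
  -- eigenvalues not identically zero
  have hev0 : ev ≠ 0 := by
    rw [hev]
    contrapose! hM0
    have := hH.spectral_theorem
    rwa [hM0, Pi.comp_zero, RCLike.ofReal_zero,
      (by rfl : Function.const (Fin n) (0 : ℂ) = fun _ ↦ 0),
      Matrix.diagonal_zero, Unitary.conjStarAlgAut_apply, mul_zero, zero_mul] at this
  obtain ⟨j₀, hj₀⟩ := Function.ne_iff.mp hev0
  have hj₀pos : 0 < ev j₀ := lt_of_le_of_ne (hnn j₀) (Ne.symm hj₀)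
  -- maximizing index
  obtain ⟨i₀, -, hi₀⟩ := Finset.exists_max_image Finset.univ ev ⟨j₀, Finset.mem_univ j₀⟩
  have hi₀le : ∀ i, ev i ≤ ev i₀ := fun i => hi₀ i (Finset.mem_univ i)
  have hi₀pos : 0 < ev i₀ := lt_of_lt_of_le hj₀pos (hi₀le j₀)
  -- spectrum
  have hspec : spectrum ℂ M = Set.range (Complex.ofReal ∘ ev) := by
    conv_lhs => rw [hH.spectral_theorem, Unitary.conjStarAlgAut_apply, Unitary.spectrum_star_right_conjugate]
    rw [spectrum_diagonal]
    rfl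
  -- trace
  have htr : M.trace = ∑ i, (ev i : ℂ) := by
    conv_lhs => rw [hH.spectral_theorem]
    rw [Unitary.conjStarAlgAut_apply, Matrix.trace_mul_cycle]
    simp [Matrix.trace_diagonal, hev]
  have htrre : M.trace.re = ∑ i, ev i := by
    rw [htr, Complex.re_sum]
    simp
  -- norm
  have hrad : spectralRadius ℂ M = ‖M‖₊ := hM.1.isSelfAdjoint.spectralRadius_eq_nnnorm
  have hrad2 : spectralRadius ℂ M = ((ev i₀).toNNReal : ENNReal) := by
    rw [spectralRadius, hspec, iSup_range]
    have hkey : ∀ i, ‖ev i‖₊ = (ev i).toNNReal := fun i => by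
      ext
      simp [Real.norm_of_nonneg (hnn i), Real.coe_toNNReal _ (hnn i)]
    apply le_antisymm
    · refine iSup_le fun i => ?_
      rw [Function.comp_apply, Complex.nnnorm_real, hkey]
      exact_mod_cast ENNReal.coe_le_coe.mpr (Real.toNNReal_mono (hi₀le i))
    · refine le_trans ?_ (le_iSup _ i₀)
      rw [Function.comp_apply, Complex.nnnorm_real, hkey]
  have hnorm : ‖M‖ = ev i₀ := by
    have : (‖M‖₊ : ENNReal) = ((ev i₀).toNNReal : ENNReal) := by rw [← hrad, hrad2]
    have h2 : ‖M‖₊ = (ev i₀).toNNReal := ENNReal.coe_inj.mp this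
    calc ‖M‖ = (‖M‖₊ : ℝ) := rfl
      _ = ((ev i₀).toNNReal : ℝ) := by rw [h2]
      _ = ev i₀ := Real.coe_toNNReal _ (hnn i₀)
  rw [htrre, hnorm, sub_eq_zero]
  rw [hH.rank_eq_card_non_zero_eigs, ← hev]
  constructor
  · intro h
    have hz : ∀ i ∈ Finset.univ.erase i₀, ev i = 0 := by
      have hsum : ∑ i ∈ Finset.univ.erase i₀, ev i = 0 := by
        have := Finset.add_sum_erase Finset.univ ev (Finset.mem_univ i₀)
        rw [← this] at h
        linarith
      intro i hi
      exact (Finset.sum_eq_zero_iff_of_nonneg (fun i _ => hnn i)).mp hsum i hi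
    refine Fintype.card_eq_one_iff.mpr ⟨⟨i₀, hi₀pos.ne'⟩, fun j => Subtype.ext ?_⟩
    obtain ⟨j, hj⟩ := j
    by_contra hji
    exact hj (hz j (Finset.mem_erase.mpr ⟨hji, Finset.mem_univ j⟩))
  · intro h
    obtain ⟨⟨j, hj⟩, hu⟩ := Fintype.card_eq_one_iff.mp h
    have hji : i₀ = j := congrArg Subtype.val (hu ⟨i₀, hi₀pos.ne'⟩)
    have hz : ∀ i, i ≠ j → ev i = 0 := by
      intro i hi
      by_contra hne
      exact hi (congrArg Subtype.val (hu ⟨i, hne⟩))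
    rw [Finset.sum_eq_single j (fun i _ hi => hz i hi) (by simp), hji]
end
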